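/- Let V be a ℚ-algebra and let π₀, π₁, …, π_s be idempotents in V such that πᵢ·πⱼ = 0 whenever i < j. Then there exist mutually orthogonal idempotents p₀, p₁, …, p_s in V (that is, pᵢ·pᵢ = pᵢ for all i, and pᵢ·pⱼ = 0 for all i ≠ j) such that for each i the idempotents πᵢ and pᵢ are equivalent: there exist elements aᵢ, bᵢ ∈ V with aᵢ·bᵢ = pᵢ and bᵢ·aᵢ = πᵢ. -/

import Mathlib

/-!
Put `cₙ = (1 - πₙ₋₁) ⋯ (1 - π₀)` and `pₙ = πₙ cₙ`. Since `πₗ πᵢ = 0` for `l < i`, every factor of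
`cⱼ` fixes `πᵢ` from the left when `j ≤ i`, so `cⱼ πᵢ = πᵢ`. Hence `pᵢ πᵢ = πᵢ` and `πᵢ pᵢ = pᵢ`,
which makes `pᵢ` an idempotent equivalent to `πᵢ` (take `a = πᵢ`, `b = pᵢ`); moreover `pⱼ πᵢ = 0`
for `j < i`, and `cᵢ` kills `pⱼ` on the left because it contains the factor `1 - πⱼ`.
-/

namespace IdempotentGramSchmidt

variable {R : Type*} [Ring R] (π : ℕ → R)

def complement : ℕ → R
  | 0 => 1
  | n + 1 => (1 - π n) * complement n

def orthIdem (n : ℕ) : R := π n * complement π n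

variable {π} {s : ℕ}

theorem complement_mul_of_le (horth : ∀ i j, i ≤ s → j ≤ s → i < j → π i * π j = 0)
    {i j : ℕ} (hji : j ≤ i) (hi : i ≤ s) : complement π j * π i = π i := by
  induction j with
  | zero => exact one_mul _
  | succ j ih =>
    rw [complement, mul_assoc, ih (by omega), sub_mul, one_mul,
      horth j i (by omega) hi (by omega), sub_zero]

theorem orthIdem_mul_of_lt (horth : ∀ i j, i ≤ s → j ≤ s → i < j → π i * π j = 0)
    {i j : ℕ} (hji : j < i) (hi : i ≤ s) : orthIdem π j * π i = 0 := by
  rw [orthIdem, mul_assoc, complement_mul_of_le horth hji.le hi,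
    horth j i (by omega) hi hji]

theorem orthIdem_mul_self (hidem : ∀ i, i ≤ s → π i * π i = π i)
    (horth : ∀ i j, i ≤ s → j ≤ s → i < j → π i * π j = 0) {i : ℕ} (hi : i ≤ s) :
    orthIdem π i * π i = π i := by
  rw [orthIdem, mul_assoc, complement_mul_of_le horth le_rfl hi, hidem i hi]

theorem mul_orthIdem_self (hidem : ∀ i, i ≤ s → π i * π i = π i) {i : ℕ} (hi : i ≤ s) :
    π i * orthIdem π i = orthIdem π i := by
  rw [orthIdem, ← mul_assoc, hidem i hi]

theorem orthIdem_mul_orthIdem_self (hidem : ∀ i, i ≤ s → π i * π i = π i)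
    (horth : ∀ i j, i ≤ s → j ≤ s → i < j → π i * π j = 0) {i : ℕ} (hi : i ≤ s) :
    orthIdem π i * orthIdem π i = orthIdem π i := by
  nth_rw 2 [orthIdem.eq_1]
  rw [← mul_assoc, orthIdem_mul_self hidem horth hi, orthIdem]

theorem complement_mul_orthIdem_of_lt (hidem : ∀ i, i ≤ s → π i * π i = π i)
    (horth : ∀ i j, i ≤ s → j ≤ s → i < j → π i * π j = 0) {i j : ℕ} (hji : j < i)
    (hj : j ≤ s) : complement π i * orthIdem π j = 0 := by
  induction i, hji using Nat.le_induction with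
  | base =>
    rw [complement, orthIdem, mul_assoc, ← mul_assoc (complement π j),
      complement_mul_of_le horth le_rfl hj, ← mul_assoc, sub_mul, one_mul, hidem j hj,
      sub_self, zero_mul]
  | succ i _ ih => rw [complement, mul_assoc, ih, mul_zero]

theorem orthIdem_mul_orthIdem_of_ne (hidem : ∀ i, i ≤ s → π i * π i = π i)
    (horth : ∀ i j, i ≤ s → j ≤ s → i < j → π i * π j = 0) {i j : ℕ} (hj : j ≤ s)
    (hij : i ≠ j) : orthIdem π i * orthIdem π j = 0 := by
  rcases hij.lt_or_gt with hij | hji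
  · rw [orthIdem.eq_1 π j, ← mul_assoc, orthIdem_mul_of_lt horth hij hj, zero_mul]
  · rw [orthIdem.eq_1 π i, mul_assoc, complement_mul_orthIdem_of_lt hidem horth hji hj, mul_zero]

end IdempotentGramSchmidt

open IdempotentGramSchmidt in
theorem stmt_3 {V : Type*} [Ring V] (s : ℕ) (π : ℕ → V)
    (hidem : ∀ i, i ≤ s → π i * π i = π i)
    (horth : ∀ i j, i ≤ s → j ≤ s → i < j → π i * π j = 0) :
    ∃ p a b : ℕ → V,
      (∀ i, i ≤ s → p i * p i = p i) ∧
      (∀ i j, i ≤ s → j ≤ s → i ≠ j → p i * p j = 0) ∧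
      (∀ i, i ≤ s → a i * b i = p i ∧ b i * a i = π i) :=
  ⟨orthIdem π, π, orthIdem π,
    fun _ hi => orthIdem_mul_orthIdem_self hidem horth hi,
    fun _ _ _ hj hij => orthIdem_mul_orthIdem_of_ne hidem horth hj hij,
    fun _ hi => ⟨mul_orthIdem_self hidem hi, orthIdem_mul_self hidem horth hi⟩⟩
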